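/- arXiv:2603.26268 — 2 statements merged into one kernel-verified Lean document; each statement's English description precedes it below -/
import Mathlib

section
/- (Hennessy-Milner theorem for bundled modalities) For image-finite Kripke models M and N (i.e. each R_a(w) is finite), pointed models M,w and N,v are τ-bisimilar if and only if they satisfy the same L_○ formulas under τ-bundled semantics. -/
/-- Bundle terms over index set `A` with arity function `ρ`. -/
inductive BTerm (A : Type) (ρ : A → ℕ) : Type where
  | pos : BTerm A ρ
  | neg : BTerm A ρ
  | nabla (a : A) (ts : Fin (ρ a) → BTerm A ρ) : BTerm A ρ
  | delta (a : A) (ts : Fin (ρ a) → BTerm A ρ) : BTerm A ρ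

variable {A : Type} {ρ : A → ℕ} {W : Type}

/-- Term satisfaction `M,w,Z ⊨ τ` in the Kripke model given by relations `R`. -/
def TSat (R : ∀ a : A, W → Set (Fin (ρ a) → W)) (w : W) (Z : Set W) : BTerm A ρ → Prop
  | .pos => w ∈ Z
  | .neg => w ∉ Z
  | .nabla a ts => ∀ v ∈ R a w, ∃ i : Fin (ρ a), TSat R (v i) Z (ts i)
  | .delta a ts => ∃ v ∈ R a w, ∀ i : Fin (ρ a), TSat R (v i) Z (ts i)

/-- The generated neighborhood `Nbh_M(w, τ)`. -/
def Nbh (R : ∀ a : A, W → Set (Fin (ρ a) → W)) : W → BTerm A ρ → Set (Set W × Set W)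
  | w, .pos => {({w}, ∅)}
  | w, .neg => {(∅, {w})}
  | w, .nabla a ts =>
      { p | ∃ f : {v // v ∈ R a w} → Set W × Set W,
          (∀ v : {v // v ∈ R a w}, ∃ i : Fin (ρ a), f v ∈ Nbh R (v.1 i) (ts i)) ∧
          p = (⋃ v, (f v).1, ⋃ v, (f v).2) }
  | w, .delta a ts =>
      { p | ∃ v ∈ R a w, ∃ g : Fin (ρ a) → Set W × Set W,
          (∀ i : Fin (ρ a), g i ∈ Nbh R (v i) (ts i)) ∧
          p = (⋃ i, (g i).1, ⋃ i, (g i).2) }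

/-- The domain `Dom_M(w, τ)`. -/
def Dom (R : ∀ a : A, W → Set (Fin (ρ a) → W)) : W → BTerm A ρ → Set W
  | w, .pos => {w}
  | w, .neg => {w}
  | w, .nabla a ts => ⋃ v ∈ R a w, ⋃ i : Fin (ρ a), Dom R (v i) (ts i)
  | w, .delta a ts => ⋃ v ∈ R a w, ⋃ i : Fin (ρ a), Dom R (v i) (ts i)

/-- The completion `Nbh^com_M(w, τ)`. -/
def NbhCom (R : ∀ a : A, W → Set (Fin (ρ a) → W)) (w : W) (τ : BTerm A ρ) : Set (Set W) :=
  { Z | Z ⊆ Dom R w τ ∧ ∃ p ∈ Nbh R w τ, p.1 ⊆ Z ∧ p.2 ⊆ Dom R w τ \ Z }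
/-- Formulas of the unimodal language `L_○`. -/
inductive Form (P : Type) : Type where
  | atom : P → Form P
  | top : Form P
  | not : Form P → Form P
  | and : Form P → Form P → Form P
  | circ : Form P → Form P

namespace Form
variable {P : Type}
/-- `φ ∨ ψ`. -/
def or (φ ψ : Form P) : Form P := .not (.and (.not φ) (.not ψ))
/-- `φ → ψ`. -/
def imp (φ ψ : Form P) : Form P := .not (.and φ (.not ψ))
/-- `φ ↔ ψ`. -/
def iff (φ ψ : Form P) : Form P := .and (imp φ ψ) (imp ψ φ)
/-- `●φ := ○¬φ`. -/
def bcirc (φ : Form P) : Form P := .circ (.not φ)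
end Form

variable {A : Type} {ρ : A → ℕ} {W P : Type}

/-- τ-bundled semantics `M,w ⊨_τ φ`. -/
def BSat (R : ∀ a : A, W → Set (Fin (ρ a) → W)) (V : P → Set W) (τ : BTerm A ρ) :
    W → Form P → Prop
  | w, .atom p => w ∈ V p
  | _, .top => True
  | w, .not φ => ¬ BSat R V τ w φ
  | w, .and φ ψ => BSat R V τ w φ ∧ BSat R V τ w ψ
  | w, .circ φ => TSat R w { v | BSat R V τ v φ } τ
/-- The image `Z[X]` of a set under a relation. -/
def relImage (Z : W → W → Prop) (X : Set W) : Set W := { v | ∃ x ∈ X, Z x v }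

/-- `X` and `Y` are `Z`-coherent (relative to the domains of `w` and `v`). -/
def ZCoherent (R : ∀ a : A, W → Set (Fin (ρ a) → W)) (τ : BTerm A ρ)
    (Z : W → W → Prop) (w v : W) (X Y : Set W) : Prop :=
  relImage Z (X ∪ Y) ∩ Dom R w τ ⊆ X ∧ relImage Z (X ∪ Y) ∩ Dom R v τ ⊆ Y

/-- `Z` is a `τ`-bisimulation on the Kripke model `(W, R, V)`. -/
def IsBisim (R : ∀ a : A, W → Set (Fin (ρ a) → W)) (V : P → Set W) (τ : BTerm A ρ)
    (Z : W → W → Prop) : Prop :=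
  ∀ w v, Z w v →
    (∀ p : P, w ∈ V p ↔ v ∈ V p) ∧
    (∀ X Y : Set W, X ⊆ Dom R w τ → Y ⊆ Dom R v τ → ZCoherent R τ Z w v X Y →
      (X ∈ NbhCom R w τ ↔ Y ∈ NbhCom R v τ))

variable {W' : Type}

/-- Relations of the disjoint union of two Kripke models. -/
def sumR (R : ∀ a : A, W → Set (Fin (ρ a) → W)) (R' : ∀ a : A, W' → Set (Fin (ρ a) → W'))
    (a : A) : W ⊕ W' → Set (Fin (ρ a) → W ⊕ W')
  | .inl w => { f | ∃ g ∈ R a w, f = Sum.inl ∘ g }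
  | .inr w => { f | ∃ g ∈ R' a w, f = Sum.inr ∘ g }

/-- Valuation of the disjoint union of two Kripke models. -/
def sumV (V : P → Set W) (V' : P → Set W') (p : P) : Set (W ⊕ W') :=
  Sum.inl '' V p ∪ Sum.inr '' V' p

/-- `M,w` and `N,v` are `τ`-bisimilar: there is a `τ`-bisimulation on the
disjoint union linking the two points. -/
def Bisimilar (R : ∀ a : A, W → Set (Fin (ρ a) → W)) (V : P → Set W)
    (R' : ∀ a : A, W' → Set (Fin (ρ a) → W')) (V' : P → Set W')
    (τ : BTerm A ρ) (w : W) (v : W') : Prop :=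
  ∃ Z : (W ⊕ W') → (W ⊕ W') → Prop,
    IsBisim (sumR R R') (sumV V V') τ Z ∧ Z (.inl w) (.inr v)
section HMAux

variable {A : Type} {ρ : A → ℕ} {W W' P : Type}

lemma nbh_subset_dom (R : ∀ a : A, W → Set (Fin (ρ a) → W)) (τ : BTerm A ρ) :
    ∀ (w : W), ∀ p ∈ Nbh R w τ, p.1 ⊆ Dom R w τ ∧ p.2 ⊆ Dom R w τ := by
  induction τ with
  | pos =>
    intro w p hp
    simp only [Nbh, Set.mem_singleton_iff] at hp
    subst hp; simp [Dom]
  | neg =>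
    intro w p hp
    simp only [Nbh, Set.mem_singleton_iff] at hp
    subst hp; simp [Dom]
  | nabla a ts ih =>
    intro w p hp
    simp only [Nbh, Set.mem_setOf_eq] at hp
    obtain ⟨f, hf, rfl⟩ := hp
    constructor
    · intro x hx
      simp only [Set.mem_iUnion] at hx
      obtain ⟨v, hxv⟩ := hx
      obtain ⟨i, hfi⟩ := hf v
      have hxd := (ih i (v.1 i) _ hfi).1 hxv
      simp only [Dom, Set.mem_iUnion]
      exact ⟨v.1, v.2, i, hxd⟩
    · intro x hx
      simp only [Set.mem_iUnion] at hx
      obtain ⟨v, hxv⟩ := hx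
      obtain ⟨i, hfi⟩ := hf v
      have hxd := (ih i (v.1 i) _ hfi).2 hxv
      simp only [Dom, Set.mem_iUnion]
      exact ⟨v.1, v.2, i, hxd⟩
  | delta a ts ih =>
    intro w p hp
    simp only [Nbh, Set.mem_setOf_eq] at hp
    obtain ⟨v, hv, g, hg, rfl⟩ := hp
    constructor
    · intro x hx
      simp only [Set.mem_iUnion] at hx
      obtain ⟨i, hxi⟩ := hx
      have hxd := (ih i (v i) _ (hg i)).1 hxi
      simp only [Dom, Set.mem_iUnion]
      exact ⟨v, hv, i, hxd⟩
    · intro x hx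
      simp only [Set.mem_iUnion] at hx
      obtain ⟨i, hxi⟩ := hx
      have hxd := (ih i (v i) _ (hg i)).2 hxi
      simp only [Dom, Set.mem_iUnion]
      exact ⟨v, hv, i, hxd⟩

lemma tsat_iff_nbhCom (R : ∀ a : A, W → Set (Fin (ρ a) → W)) (τ : BTerm A ρ) :
    ∀ (w : W) (Z : Set W), TSat R w Z τ ↔ Z ∩ Dom R w τ ∈ NbhCom R w τ := by
  induction τ with
  | pos =>
    intro w Z
    simp only [TSat, NbhCom, Dom, Nbh, Set.mem_setOf_eq, Set.mem_singleton_iff]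
    constructor
    · intro h
      exact ⟨Set.inter_subset_right, ({w}, ∅), rfl, by
        intro x hx
        simp only [Set.mem_singleton_iff] at hx
        subst hx
        exact ⟨h, rfl⟩, by simp⟩
    · rintro ⟨-, p, rfl, h1, -⟩
      exact (h1 rfl).1
  | neg =>
    intro w Z
    simp only [TSat, NbhCom, Dom, Nbh, Set.mem_setOf_eq, Set.mem_singleton_iff]
    constructor
    · intro h
      refine ⟨Set.inter_subset_right, (∅, {w}), rfl, by simp, ?_⟩
      intro x hx
      simp only [Set.mem_singleton_iff] at hx
      subst hx
      exact ⟨rfl, fun hz => h hz.1⟩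
    · rintro ⟨-, p, rfl, -, h2⟩
      intro hz
      exact (h2 rfl).2 ⟨hz, rfl⟩
  | nabla a ts ih =>
    intro w Z
    constructor
    · intro h
      have hch : ∀ v : {v // v ∈ R a w}, ∃ (i : Fin (ρ a)) (p : Set W × Set W),
          p ∈ Nbh R (v.1 i) (ts i) ∧ p.1 ⊆ Z ∩ Dom R (v.1 i) (ts i) ∧
          p.2 ⊆ Dom R (v.1 i) (ts i) \ (Z ∩ Dom R (v.1 i) (ts i)) := by
        intro v
        obtain ⟨i, hi⟩ := h v.1 v.2
        obtain ⟨-, p, hp, h1, h2⟩ := (ih i (v.1 i) Z).1 hi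
        exact ⟨i, p, hp, h1, h2⟩
      choose i p hp h1 h2 using hch
      refine ⟨Set.inter_subset_right, (⋃ v, (p v).1, ⋃ v, (p v).2),
        ⟨p, fun v => ⟨i v, hp v⟩, rfl⟩, ?_, ?_⟩
      · intro x hx
        simp only [Set.mem_iUnion] at hx
        obtain ⟨v, hxv⟩ := hx
        have hx1 := h1 v hxv
        refine ⟨hx1.1, ?_⟩
        simp only [Dom, Set.mem_iUnion]
        exact ⟨v.1, v.2, i v, hx1.2⟩
      · intro x hx
        simp only [Set.mem_iUnion] at hx
        obtain ⟨v, hxv⟩ := hx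
        have hx2 := h2 v hxv
        refine ⟨?_, ?_⟩
        · simp only [Dom, Set.mem_iUnion]
          exact ⟨v.1, v.2, i v, hx2.1⟩
        · intro hxz
          exact hx2.2 ⟨hxz.1, hx2.1⟩
    · rintro ⟨-, q, hq, h1, h2⟩
      simp only [Nbh, Set.mem_setOf_eq] at hq
      obtain ⟨f, hf, rfl⟩ := hq
      intro v hv
      obtain ⟨i, hfi⟩ := hf ⟨v, hv⟩
      refine ⟨i, (ih i (v i) Z).2 ?_⟩
      have hd := nbh_subset_dom R (ts i) (v i) _ hfi
      refine ⟨Set.inter_subset_right, f ⟨v, hv⟩, hfi, ?_, ?_⟩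
      · intro x hx
        exact ⟨(h1 (Set.mem_iUnion.2 ⟨⟨v, hv⟩, hx⟩)).1, hd.1 hx⟩
      · intro x hx
        have hxd := hd.2 hx
        have hx2 := h2 (Set.mem_iUnion.2 ⟨⟨v, hv⟩, hx⟩)
        exact ⟨hxd, fun hxz => hx2.2 ⟨hxz.1, hx2.1⟩⟩
  | delta a ts ih =>
    intro w Z
    constructor
    · rintro ⟨v, hv, hts⟩
      have hch : ∀ i : Fin (ρ a), ∃ p : Set W × Set W,
          p ∈ Nbh R (v i) (ts i) ∧ p.1 ⊆ Z ∩ Dom R (v i) (ts i) ∧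
          p.2 ⊆ Dom R (v i) (ts i) \ (Z ∩ Dom R (v i) (ts i)) := by
        intro i
        obtain ⟨-, p, hp, h1, h2⟩ := (ih i (v i) Z).1 (hts i)
        exact ⟨p, hp, h1, h2⟩
      choose p hp h1 h2 using hch
      refine ⟨Set.inter_subset_right, (⋃ i, (p i).1, ⋃ i, (p i).2),
        ⟨v, hv, p, hp, rfl⟩, ?_, ?_⟩
      · intro x hx
        simp only [Set.mem_iUnion] at hx
        obtain ⟨i, hxi⟩ := hx
        have hx1 := h1 i hxi
        refine ⟨hx1.1, ?_⟩
        simp only [Dom, Set.mem_iUnion]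
        exact ⟨v, hv, i, hx1.2⟩
      · intro x hx
        simp only [Set.mem_iUnion] at hx
        obtain ⟨i, hxi⟩ := hx
        have hx2 := h2 i hxi
        refine ⟨?_, ?_⟩
        · simp only [Dom, Set.mem_iUnion]
          exact ⟨v, hv, i, hx2.1⟩
        · intro hxz
          exact hx2.2 ⟨hxz.1, hx2.1⟩
    · rintro ⟨-, q, hq, h1, h2⟩
      simp only [Nbh, Set.mem_setOf_eq] at hq
      obtain ⟨v, hv, g, hg, rfl⟩ := hq
      refine ⟨v, hv, fun i => (ih i (v i) Z).2 ?_⟩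
      have hd := nbh_subset_dom R (ts i) (v i) _ (hg i)
      refine ⟨Set.inter_subset_right, g i, hg i, ?_, ?_⟩
      · intro x hx
        exact ⟨(h1 (Set.mem_iUnion.2 ⟨i, hx⟩)).1, hd.1 hx⟩
      · intro x hx
        have hxd := hd.2 hx
        have hx2 := h2 (Set.mem_iUnion.2 ⟨i, hx⟩)
        exact ⟨hxd, fun hxz => hx2.2 ⟨hxz.1, hx2.1⟩⟩

lemma tsat_congr (R : ∀ a : A, W → Set (Fin (ρ a) → W)) (τ : BTerm A ρ) (w : W)
    {Z Z' : Set W} (h : Z ∩ Dom R w τ = Z' ∩ Dom R w τ) :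
    TSat R w Z τ ↔ TSat R w Z' τ := by
  rw [tsat_iff_nbhCom, tsat_iff_nbhCom, h]

lemma dom_finite (R : ∀ a : A, W → Set (Fin (ρ a) → W))
    (hfin : ∀ (a : A) (w : W), (R a w).Finite) (τ : BTerm A ρ) :
    ∀ w : W, (Dom R w τ).Finite := by
  induction τ with
  | pos => intro w; simp [Dom]
  | neg => intro w; simp [Dom]
  | nabla a ts ih =>
    intro w
    simp only [Dom]
    exact (hfin a w).biUnion fun v _ => Set.finite_iUnion fun i => ih i (v i)
  | delta a ts ih =>
    intro w
    simp only [Dom]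
    exact (hfin a w).biUnion fun v _ => Set.finite_iUnion fun i => ih i (v i)

/-- Finite conjunction of a list of formulas. -/
def FormConj : List (Form P) → Form P
  | [] => .top
  | φ :: l => .and φ (FormConj l)

lemma bsat_conj (R : ∀ a : A, W → Set (Fin (ρ a) → W)) (V : P → Set W)
    (τ : BTerm A ρ) (w : W) :
    ∀ l : List (Form P), BSat R V τ w (FormConj l) ↔ ∀ φ ∈ l, BSat R V τ w φ
  | [] => by simp [FormConj, BSat]
  | φ :: l => by simp [FormConj, BSat, bsat_conj R V τ w l]

/-- Finite disjunction of a list of formulas. -/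
def FormDisj (l : List (Form P)) : Form P := .not (FormConj (l.map .not))

lemma bsat_disj (R : ∀ a : A, W → Set (Fin (ρ a) → W)) (V : P → Set W)
    (τ : BTerm A ρ) (w : W) (l : List (Form P)) :
    BSat R V τ w (FormDisj l) ↔ ∃ φ ∈ l, BSat R V τ w φ := by
  have : BSat R V τ w (FormDisj l) ↔ ¬ BSat R V τ w (FormConj (l.map .not)) := Iff.rfl
  rw [this, bsat_conj]
  simp only [List.mem_map, forall_exists_index, and_imp]
  constructor
  · intro h
    by_contra hc
    push_neg at hc
    apply h
    intro ψ φ hφ hψ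
    subst hψ
    exact fun hB => hc φ hφ hB
  · rintro ⟨φ, hφ, hB⟩ h
    exact h (.not φ) φ hφ rfl hB

lemma bisim_invariance (R : ∀ a : A, W → Set (Fin (ρ a) → W)) (V : P → Set W)
    (τ : BTerm A ρ) (Z : W → W → Prop) (hZ : IsBisim R V τ Z) :
    ∀ (φ : Form P) (x y : W), Z x y → (BSat R V τ x φ ↔ BSat R V τ y φ) := by
  intro φ
  induction φ with
  | atom p => exact fun x y h => (hZ x y h).1 p
  | top => intro x y h; simp [BSat]
  | not ψ ih => intro x y h; simp only [BSat]; rw [ih x y h]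
  | and ψ χ ih1 ih2 => intro x y h; simp only [BSat]; rw [ih1 x y h, ih2 x y h]
  | circ ψ ih =>
    intro x y h
    simp only [BSat]
    set S : Set W := {v | BSat R V τ v ψ} with hS
    have hcoh : ZCoherent R τ Z x y (S ∩ Dom R x τ) (S ∩ Dom R y τ) := by
      constructor
      · rintro t ⟨⟨s, hs, hst⟩, htD⟩
        have hsS : s ∈ S := by rcases hs with h' | h' <;> exact h'.1
        exact ⟨(ih s t hst).1 hsS, htD⟩
      · rintro t ⟨⟨s, hs, hst⟩, htD⟩
        have hsS : s ∈ S := by rcases hs with h' | h' <;> exact h'.1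
        exact ⟨(ih s t hst).1 hsS, htD⟩
    have key := (hZ x y h).2 (S ∩ Dom R x τ) (S ∩ Dom R y τ)
      Set.inter_subset_right Set.inter_subset_right hcoh
    rw [tsat_iff_nbhCom R τ x S, tsat_iff_nbhCom R τ y S]
    exact key

lemma isBisim_mequiv (R : ∀ a : A, W → Set (Fin (ρ a) → W)) (V : P → Set W)
    (τ : BTerm A ρ) (hfin : ∀ (a : A) (w : W), (R a w).Finite) :
    IsBisim R V τ (fun x y => ∀ φ : Form P, BSat R V τ x φ ↔ BSat R V τ y φ) := by
  classical
  intro x y hxy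
  refine ⟨fun p => hxy (.atom p), ?_⟩
  intro X Y hX hY hcoh
  have hD : (Dom R x τ ∪ Dom R y τ).Finite :=
    (dom_finite R hfin τ x).union (dom_finite R hfin τ y)
  set U : Set W := X ∪ Y with hUdef
  have hU : U ⊆ Dom R x τ ∪ Dom R y τ := Set.union_subset_union hX hY
  have hUfin : U.Finite := hD.subset hU
  set T : Set W := (Dom R x τ ∪ Dom R y τ) \ U with hTdef
  have hTfin : T.Finite := hD.subset Set.diff_subset
  have hdist : ∀ u ∈ U, ∀ t ∈ T, ∃ φ : Form P, BSat R V τ u φ ∧ ¬ BSat R V τ t φ := by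
    intro u hu t ht
    by_contra hcon
    push_neg at hcon
    have hequiv : ∀ φ : Form P, BSat R V τ u φ ↔ BSat R V τ t φ := by
      intro φ
      constructor
      · exact hcon φ
      · intro hφ
        by_contra hu'
        have : BSat R V τ t (.not φ) := hcon (.not φ) hu'
        exact this hφ
    have hmem : t ∈ relImage (fun x y => ∀ φ : Form P, BSat R V τ x φ ↔ BSat R V τ y φ) U :=
      ⟨u, hu, hequiv⟩
    rcases ht.1 with hdx | hdy
    · exact ht.2 (Or.inl (hcoh.1 ⟨hmem, hdx⟩))
    · exact ht.2 (Or.inr (hcoh.2 ⟨hmem, hdy⟩))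
  haveI : Inhabited (Form P) := ⟨.top⟩
  choose! φd hφd1 hφd2 using hdist
  set φU : W → Form P := fun u => FormConj (hTfin.toFinset.toList.map (φd u)) with hφUdef
  have hφU1 : ∀ u ∈ U, BSat R V τ u (φU u) := by
    intro u hu
    rw [hφUdef, bsat_conj]
    intro ψ hψ
    simp only [List.mem_map, Finset.mem_toList, Set.Finite.mem_toFinset] at hψ
    obtain ⟨t, ht, rfl⟩ := hψ
    exact hφd1 u hu t ht
  have hφU2 : ∀ t ∈ T, ∀ u ∈ U, ¬ BSat R V τ t (φU u) := by
    intro t ht u hu hB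
    rw [hφUdef, bsat_conj] at hB
    refine hφd2 u hu t ht (hB (φd u t) ?_)
    simp only [List.mem_map, Finset.mem_toList, Set.Finite.mem_toFinset]
    exact ⟨t, ht, rfl⟩
  set Φ : Form P := FormDisj (hUfin.toFinset.toList.map φU) with hΦdef
  set S : Set W := {s | BSat R V τ s Φ} with hSdef
  have hSU : U ⊆ S := by
    intro u hu
    have : BSat R V τ u Φ := by
      rw [hΦdef, bsat_disj]
      refine ⟨φU u, ?_, hφU1 u hu⟩
      simp only [List.mem_map, Finset.mem_toList, Set.Finite.mem_toFinset]
      exact ⟨u, hu, rfl⟩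
    exact this
  have hST : ∀ t ∈ T, t ∉ S := by
    intro t ht hs
    have hs' : BSat R V τ t Φ := hs
    rw [hΦdef, bsat_disj] at hs'
    obtain ⟨ψ, hψ, hB⟩ := hs'
    simp only [List.mem_map, Finset.mem_toList, Set.Finite.mem_toFinset] at hψ
    obtain ⟨u, hu, rfl⟩ := hψ
    exact hφU2 t ht u hu hB
  have hSX : S ∩ Dom R x τ = X := by
    apply Set.Subset.antisymm
    · rintro s ⟨hsS, hsD⟩
      have hsU : s ∈ U := by
        by_contra hns
        exact hST s ⟨Or.inl hsD, hns⟩ hsS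
      exact hcoh.1 ⟨⟨s, hsU, fun φ => Iff.rfl⟩, hsD⟩
    · intro s hs
      exact ⟨hSU (Or.inl hs), hX hs⟩
  have hSY : S ∩ Dom R y τ = Y := by
    apply Set.Subset.antisymm
    · rintro s ⟨hsS, hsD⟩
      have hsU : s ∈ U := by
        by_contra hns
        exact hST s ⟨Or.inr hsD, hns⟩ hsS
      exact hcoh.2 ⟨⟨s, hsU, fun φ => Iff.rfl⟩, hsD⟩
    · intro s hs
      exact ⟨hSU (Or.inr hs), hY hs⟩
  have e1 : (X ∈ NbhCom R x τ) ↔ TSat R x S τ := by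
    have h' := tsat_iff_nbhCom R τ x S
    rw [hSX] at h'
    exact h'.symm
  have e2 : (Y ∈ NbhCom R y τ) ↔ TSat R y S τ := by
    have h' := tsat_iff_nbhCom R τ y S
    rw [hSY] at h'
    exact h'.symm
  have e3 : TSat R x S τ ↔ TSat R y S τ := hxy (.circ Φ)
  rw [e1, e2]
  exact e3

lemma tsat_sum_inl (R : ∀ a : A, W → Set (Fin (ρ a) → W))
    (R' : ∀ a : A, W' → Set (Fin (ρ a) → W')) (τ : BTerm A ρ) :
    ∀ (w : W) (S : Set (W ⊕ W')),
      TSat (sumR R R') (Sum.inl w) S τ ↔ TSat R w (Sum.inl ⁻¹' S) τ := by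
  induction τ with
  | pos => intro w S; exact Iff.rfl
  | neg => intro w S; exact Iff.rfl
  | nabla a ts ih =>
    intro w S
    simp only [TSat]
    constructor
    · intro h g hg
      obtain ⟨i, hi⟩ := h (Sum.inl ∘ g) ⟨g, hg, rfl⟩
      exact ⟨i, (ih i (g i) S).1 hi⟩
    · rintro h f ⟨g, hg, rfl⟩
      obtain ⟨i, hi⟩ := h g hg
      exact ⟨i, (ih i (g i) S).2 hi⟩
  | delta a ts ih =>
    intro w S
    simp only [TSat]
    constructor
    · rintro ⟨f, ⟨g, hg, rfl⟩, hf⟩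
      exact ⟨g, hg, fun i => (ih i (g i) S).1 (hf i)⟩
    · rintro ⟨g, hg, hf⟩
      exact ⟨Sum.inl ∘ g, ⟨g, hg, rfl⟩, fun i => (ih i (g i) S).2 (hf i)⟩

lemma tsat_sum_inr (R : ∀ a : A, W → Set (Fin (ρ a) → W))
    (R' : ∀ a : A, W' → Set (Fin (ρ a) → W')) (τ : BTerm A ρ) :
    ∀ (w : W') (S : Set (W ⊕ W')),
      TSat (sumR R R') (Sum.inr w) S τ ↔ TSat R' w (Sum.inr ⁻¹' S) τ := by
  induction τ with
  | pos => intro w S; exact Iff.rfl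
  | neg => intro w S; exact Iff.rfl
  | nabla a ts ih =>
    intro w S
    simp only [TSat]
    constructor
    · intro h g hg
      obtain ⟨i, hi⟩ := h (Sum.inr ∘ g) ⟨g, hg, rfl⟩
      exact ⟨i, (ih i (g i) S).1 hi⟩
    · rintro h f ⟨g, hg, rfl⟩
      obtain ⟨i, hi⟩ := h g hg
      exact ⟨i, (ih i (g i) S).2 hi⟩
  | delta a ts ih =>
    intro w S
    simp only [TSat]
    constructor
    · rintro ⟨f, ⟨g, hg, rfl⟩, hf⟩
      exact ⟨g, hg, fun i => (ih i (g i) S).1 (hf i)⟩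
    · rintro ⟨g, hg, hf⟩
      exact ⟨Sum.inr ∘ g, ⟨g, hg, rfl⟩, fun i => (ih i (g i) S).2 (hf i)⟩

lemma bsat_sum_inl (R : ∀ a : A, W → Set (Fin (ρ a) → W))
    (R' : ∀ a : A, W' → Set (Fin (ρ a) → W'))
    (V : P → Set W) (V' : P → Set W') (τ : BTerm A ρ) :
    ∀ (φ : Form P) (w : W),
      BSat (sumR R R') (sumV V V') τ (Sum.inl w) φ ↔ BSat R V τ w φ := by
  intro φ
  induction φ with
  | atom p =>
    intro w
    simp [BSat, sumV, Set.mem_union, Set.mem_image]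
  | top => intro w; simp [BSat]
  | not ψ ih => intro w; simp only [BSat]; rw [ih w]
  | and ψ χ ih1 ih2 => intro w; simp only [BSat]; rw [ih1 w, ih2 w]
  | circ ψ ih =>
    intro w
    simp only [BSat]
    rw [tsat_sum_inl]
    have heq : Sum.inl ⁻¹' {v : W ⊕ W' | BSat (sumR R R') (sumV V V') τ v ψ}
        = {v : W | BSat R V τ v ψ} := by
      ext u; exact ih u
    rw [heq]

lemma bsat_sum_inr (R : ∀ a : A, W → Set (Fin (ρ a) → W))
    (R' : ∀ a : A, W' → Set (Fin (ρ a) → W'))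
    (V : P → Set W) (V' : P → Set W') (τ : BTerm A ρ) :
    ∀ (φ : Form P) (w : W'),
      BSat (sumR R R') (sumV V V') τ (Sum.inr w) φ ↔ BSat R' V' τ w φ := by
  intro φ
  induction φ with
  | atom p =>
    intro w
    simp [BSat, sumV, Set.mem_union, Set.mem_image]
  | top => intro w; simp [BSat]
  | not ψ ih => intro w; simp only [BSat]; rw [ih w]
  | and ψ χ ih1 ih2 => intro w; simp only [BSat]; rw [ih1 w, ih2 w]
  | circ ψ ih =>
    intro w
    simp only [BSat]
    rw [tsat_sum_inr]
    have heq : Sum.inr ⁻¹' {v : W ⊕ W' | BSat (sumR R R') (sumV V V') τ v ψ}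
        = {v : W' | BSat R' V' τ v ψ} := by
      ext u; exact ih u
    rw [heq]

end HMAux

/-- Hennessy–Milner: over image-finite models, `τ`-bisimilarity
coincides with `τ`-modal equivalence. -/
theorem hennessy_milner [Countable P] {W' : Type}
    (R : ∀ a : A, W → Set (Fin (ρ a) → W)) (V : P → Set W)
    (R' : ∀ a : A, W' → Set (Fin (ρ a) → W')) (V' : P → Set W')
    (hM : ∀ (a : A) (w : W), (R a w).Finite)
    (hN : ∀ (a : A) (v : W'), (R' a v).Finite)
    (τ : BTerm A ρ) (w : W) (v : W') :
    Bisimilar R V R' V' τ w v ↔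
      (∀ φ : Form P, BSat R V τ w φ ↔ BSat R' V' τ v φ) := by
  constructor
  · rintro ⟨Z, hZ, hwv⟩ φ
    exact (bsat_sum_inl R R' V V' τ φ w).symm.trans
      ((bisim_invariance _ _ _ Z hZ φ _ _ hwv).trans (bsat_sum_inr R R' V V' τ φ v))
  · intro h
    refine ⟨fun x y => ∀ φ : Form P,
        BSat (sumR R R') (sumV V V') τ x φ ↔ BSat (sumR R R') (sumV V V') τ y φ, ?_, ?_⟩
    · apply isBisim_mequiv
      intro a x
      cases x with
      | inl u =>
        have heq : sumR R R' a (Sum.inl u) = (fun g => Sum.inl ∘ g) '' R a u := by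
          ext f
          simp only [sumR, Set.mem_setOf_eq, Set.mem_image]
          constructor
          · rintro ⟨g, hg, rfl⟩; exact ⟨g, hg, rfl⟩
          · rintro ⟨g, hg, rfl⟩; exact ⟨g, hg, rfl⟩
        rw [heq]
        exact (hM a u).image _
      | inr u =>
        have heq : sumR R R' a (Sum.inr u) = (fun g => Sum.inr ∘ g) '' R' a u := by
          ext f
          simp only [sumR, Set.mem_setOf_eq, Set.mem_image]
          constructor
          · rintro ⟨g, hg, rfl⟩; exact ⟨g, hg, rfl⟩
          · rintro ⟨g, hg, rfl⟩; exact ⟨g, hg, rfl⟩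
        rw [heq]
        exact (hN a u).image _
    · intro φ
      exact (bsat_sum_inl R R' V V' τ φ w).trans
        ((h φ).trans (bsat_sum_inr R R' V V' τ φ v).symm)
end

section
/- If a convex neighborhood model N is τ-represented by a Kripke model M, then for every world w of N and every formula φ of L_○: N,w ⊩ φ (neighborhood semantics) if and only if M,w ⊨_τ φ (τ-bundled semantics). -/
variable {A : Type} {ρ : A → ℕ} {W : Type}

variable {A : Type} {ρ : A → ℕ} {W P : Type}

/-- A convex neighborhood model. -/
structure NbhModel (W P : Type) where
  Np : W → Set (Set W)
  Nm : W → Set (Set W)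
  V : P → Set W

/-- Convex neighborhood semantics `N,w ⊩ φ`. -/
def NSat {W P : Type} (N : NbhModel W P) : W → Form P → Prop
  | w, .atom p => w ∈ N.V p
  | _, .top => True
  | w, .not φ => ¬ NSat N w φ
  | w, .and φ ψ => NSat N w φ ∧ NSat N w ψ
  | w, .circ φ => ∃ X ∈ N.Np w, ∃ Y ∈ N.Nm w,
      X ⊆ { v | NSat N v φ } ∧ Y ⊆ { v | NSat N v φ }ᶜ
/-- A convex neighborhood model on the set `S` of worlds of the Kripke model
`(W, R, V')` is `τ`-represented by that Kripke model. -/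
def Represented {A : Type} {ρ : A → ℕ} {W P : Type}
    (R : ∀ a : A, W → Set (Fin (ρ a) → W)) (V' : P → Set W) (τ : BTerm A ρ)
    (S : Set W) (N : NbhModel S P) : Prop :=
  (∀ p : P, N.V p = Subtype.val ⁻¹' V' p) ∧
  (∀ w : S, ∀ p ∈ Nbh R (w : W) τ, p.1 ∩ p.2 = ∅ →
    ∃ X' ∈ N.Np w, ∃ Y' ∈ N.Nm w,
      Subtype.val '' X' ⊆ p.1 ∧ Subtype.val '' Y' ⊆ p.2) ∧
  (∀ w : S, ∀ X' ∈ N.Np w, ∀ Y' ∈ N.Nm w, X' ∩ Y' = ∅ →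
    ∃ p ∈ Nbh R (w : W) τ,
      p.1 ⊆ Subtype.val '' X' ∧ p.2 ⊆ Subtype.val '' Y')

lemma tsat_iff_nbh (R : ∀ a : A, W → Set (Fin (ρ a) → W)) (Z : Set W) :
    ∀ (τ : BTerm A ρ) (w : W),
      TSat R w Z τ ↔ ∃ p ∈ Nbh R w τ, p.1 ⊆ Z ∧ p.2 ⊆ Zᶜ := by
  intro τ
  induction τ with
  | pos =>
    intro w
    simp only [TSat, Nbh, Set.mem_singleton_iff]
    constructor
    · intro hw
      exact ⟨({w}, ∅), rfl, by simpa using hw, by simp⟩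
    · rintro ⟨p, rfl, h1, h2⟩
      exact h1 rfl
  | neg =>
    intro w
    simp only [TSat, Nbh, Set.mem_singleton_iff]
    constructor
    · intro hw
      exact ⟨(∅, {w}), rfl, by simp, by simpa using hw⟩
    · rintro ⟨p, rfl, h1, h2⟩
      exact h2 rfl
  | nabla a ts ih =>
    intro w
    constructor
    · intro hT
      have hch : ∀ v : {v // v ∈ R a w}, ∃ p : Set W × Set W,
          (∃ i : Fin (ρ a), p ∈ Nbh R (v.1 i) (ts i)) ∧ p.1 ⊆ Z ∧ p.2 ⊆ Zᶜ := by
        rintro ⟨v, hv⟩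
        obtain ⟨i, hi⟩ := hT v hv
        obtain ⟨p, hp, h1, h2⟩ := (ih i (v i)).mp hi
        exact ⟨p, ⟨i, hp⟩, h1, h2⟩
      choose f hf h1 h2 using hch
      refine ⟨(⋃ v, (f v).1, ⋃ v, (f v).2), ⟨f, hf, rfl⟩, ?_, ?_⟩
      · exact Set.iUnion_subset h1
      · exact Set.iUnion_subset h2
    · rintro ⟨p, ⟨f, hf, rfl⟩, h1, h2⟩
      intro v hv
      obtain ⟨i, hi⟩ := hf ⟨v, hv⟩
      refine ⟨i, (ih i (v i)).mpr ⟨f ⟨v, hv⟩, hi, ?_, ?_⟩⟩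
      · exact (Set.subset_iUnion (fun u => (f u).1) ⟨v, hv⟩).trans h1
      · exact (Set.subset_iUnion (fun u => (f u).2) ⟨v, hv⟩).trans h2
  | delta a ts ih =>
    intro w
    constructor
    · rintro ⟨v, hv, hall⟩
      have hch : ∀ i : Fin (ρ a), ∃ p : Set W × Set W,
          p ∈ Nbh R (v i) (ts i) ∧ p.1 ⊆ Z ∧ p.2 ⊆ Zᶜ := fun i =>
        (ih i (v i)).mp (hall i)
      choose g hg h1 h2 using hch
      refine ⟨(⋃ i, (g i).1, ⋃ i, (g i).2), ⟨v, hv, g, hg, rfl⟩, ?_, ?_⟩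
      · exact Set.iUnion_subset h1
      · exact Set.iUnion_subset h2
    · rintro ⟨p, ⟨v, hv, g, hg, rfl⟩, h1, h2⟩
      refine ⟨v, hv, fun i => (ih i (v i)).mpr ⟨g i, hg i, ?_, ?_⟩⟩
      · exact (Set.subset_iUnion (fun j => (g j).1) i).trans h1
      · exact (Set.subset_iUnion (fun j => (g j).2) i).trans h2

/-- if `N` is `τ`-represented by `M`, then neighborhood truth in
`N` coincides with `τ`-bundled truth in `M`. -/
theorem represented_truth {A : Type} {ρ : A → ℕ} {W P : Type}
    (R : ∀ a : A, W → Set (Fin (ρ a) → W)) (V' : P → Set W) (τ : BTerm A ρ)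
    (S : Set W) (N : NbhModel S P) (h : Represented R V' τ S N) :
    ∀ (w : S) (φ : Form P), NSat N w φ ↔ BSat R V' τ (w : W) φ := by
  obtain ⟨hV, hfw, hbw⟩ := h
  intro w φ
  induction φ generalizing w with
  | atom p => simp [NSat, BSat, hV p]
  | top => simp [NSat, BSat]
  | not φ ih => simp [NSat, BSat, ih w]
  | and φ ψ ihφ ihψ => simp [NSat, BSat, ihφ w, ihψ w]
  | circ φ ih =>
    set Z : Set W := { v | BSat R V' τ v φ } with hZ
    show (∃ X ∈ N.Np w, ∃ Y ∈ N.Nm w, _ ∧ _) ↔ TSat R (w : W) Z τ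
    rw [tsat_iff_nbh]
    constructor
    · rintro ⟨X, hX, Y, hY, hXs, hYs⟩
      have hdisj : X ∩ Y = ∅ := by
        ext x
        simp only [Set.mem_inter_iff, Set.mem_empty_iff_false, iff_false]
        rintro ⟨hx, hy⟩
        exact (hYs hy) (hXs hx)
      obtain ⟨p, hp, h1, h2⟩ := hbw w X hX Y hY hdisj
      refine ⟨p, hp, ?_, ?_⟩
      · intro x hx
        obtain ⟨x', hx', rfl⟩ := h1 hx
        exact (ih x').mp (hXs hx')
      · intro x hx
        obtain ⟨x', hx', rfl⟩ := h2 hx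
        exact fun hc => (hYs hx') ((ih x').mpr hc)
    · rintro ⟨p, hp, h1, h2⟩
      have hdisj : p.1 ∩ p.2 = ∅ := by
        ext x
        simp only [Set.mem_inter_iff, Set.mem_empty_iff_false, iff_false]
        rintro ⟨hx, hy⟩
        exact h2 hy (h1 hx)
      obtain ⟨X, hX, Y, hY, h1', h2'⟩ := hfw w p hp hdisj
      refine ⟨X, hX, Y, hY, ?_, ?_⟩
      · intro x hx
        exact (ih x).mpr (h1 (h1' ⟨x, hx, rfl⟩))
      · intro x hx hc
        exact h2 (h2' ⟨x, hx, rfl⟩) ((ih x).mp hc)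
end
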